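/- Let H be a Hilbert space, (T(t)) a C₀-semigroup on H with T(t) compact for each t > 0, and let y_m(t) = T(t)y₀ + ∫₀ᵗ T(t−s)f_m(s) ds with ‖f_m(s)‖ ≤ K uniformly. Then {y_m(t) : m ∈ ℕ} is relatively compact in H for each t ∈ [0,τ], and {y_m} is relatively compact in C([0,τ]; H). -/

import Mathlib

open MeasureTheory Set Pointwise

set_option linter.unusedSectionVars false

section Aux

variable {H : Type*} [NormedAddCommGroup H] [NormedSpace ℝ H] [CompleteSpace H]

lemma aux_norm_integral (T : ℝ → H →L[ℝ] H) (g : ℝ → H) (M K τ : ℝ) (hτ : 0 ≤ τ)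
    (hM : ∀ u ∈ Icc (0:ℝ) τ, ‖T u‖ ≤ M) (hg : ∀ s ∈ Icc (0:ℝ) τ, ‖g s‖ ≤ K)
    (v u : ℝ) (h0 : 0 ≤ v) (hvu : v ≤ u) (huτ : u ≤ τ) :
    ‖∫ s in v..u, T (u - s) (g s)‖ ≤ M * K * (u - v) := by
  have hM0 : 0 ≤ M := le_trans (norm_nonneg _) (hM 0 ⟨le_refl _, hτ⟩)
  have h := intervalIntegral.norm_integral_le_of_norm_le_const
    (a := v) (b := u) (C := M * K) (f := fun s => T (u - s) (g s)) ?_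
  · rwa [abs_of_nonneg (sub_nonneg.2 hvu)] at h
  · intro x hx
    rw [uIoc_of_le hvu] at hx
    have hx1 : x ∈ Icc (0:ℝ) τ := ⟨le_of_lt (lt_of_le_of_lt h0 hx.1), le_trans hx.2 huτ⟩
    have hux : u - x ∈ Icc (0:ℝ) τ := ⟨sub_nonneg.2 hx.2, by linarith [hx.1]⟩
    calc ‖T (u-x) (g x)‖ ≤ ‖T (u-x)‖ * ‖g x‖ := (T (u-x)).le_opNorm _
      _ ≤ M * K := mul_le_mul (hM _ hux) (hg _ hx1) (norm_nonneg _) hM0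

lemma aux_split (T : ℝ → H →L[ℝ] H) (g : ℝ → H)
    (hTadd : ∀ s t : ℝ, 0 ≤ s → 0 ≤ t → T (s + t) = (T s).comp (T t))
    (v u : ℝ) (h0 : 0 ≤ v) (hvu : v ≤ u)
    (hgv : IntervalIntegrable (fun s => T (v - s) (g s)) volume 0 v)
    (hgu : IntervalIntegrable (fun s => T (u - s) (g s)) volume 0 u) :
    (∫ s in (0:ℝ)..u, T (u - s) (g s)) =
      T (u - v) (∫ s in (0:ℝ)..v, T (v - s) (g s)) + ∫ s in v..u, T (u - s) (g s) := by
  have hsub1 : uIcc (0:ℝ) v ⊆ uIcc (0:ℝ) u := by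
    rw [uIcc_of_le h0, uIcc_of_le (h0.trans hvu)]; exact Icc_subset_Icc_right hvu
  have hsub2 : uIcc v u ⊆ uIcc (0:ℝ) u := by
    rw [uIcc_of_le hvu, uIcc_of_le (h0.trans hvu)]; exact Icc_subset_Icc_left h0
  have h1 := hgu.mono_set hsub1
  have h2 := hgu.mono_set hsub2
  rw [← intervalIntegral.integral_add_adjacent_intervals h1 h2]
  congr 1
  have hcongr : EqOn (fun s => T (u - s) (g s)) (fun s => T (u - v) (T (v - s) (g s)))
      (uIcc (0:ℝ) v) := by
    intro s hs
    rw [uIcc_of_le h0] at hs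
    have heq : T (u - s) = (T (u-v)).comp (T (v - s)) := by
      have h := hTadd (u - v) (v - s) (sub_nonneg.2 hvu) (sub_nonneg.2 hs.2)
      rwa [show u - v + (v - s) = u - s by ring] at h
    simp only [heq, ContinuousLinearMap.comp_apply]
  rw [intervalIntegral.integral_congr hcongr,
    ContinuousLinearMap.intervalIntegral_comp_comm _ hgv]

lemma aux_vanish_closure {g : ℝ → H} {s B : Set ℝ} (hs : IsClosed s) (hB : B ⊆ s)
    (hg : ContinuousOn g s) (h0 : ∀ u ∈ B, g u = 0) : ∀ u ∈ closure B, g u = 0 := by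
  intro u hu
  have hus : u ∈ s := hs.closure_subset_iff.2 hB hu
  haveI : (nhdsWithin u B).NeBot := mem_closure_iff_nhdsWithin_neBot.1 hu
  have h1 : Filter.Tendsto g (nhdsWithin u B) (nhds (g u)) :=
    (hg u hus).mono_left (nhdsWithin_mono _ hB)
  have h2 : Filter.Tendsto g (nhdsWithin u B) (nhds 0) := by
    refine Filter.Tendsto.congr' ?_ tendsto_const_nhds
    filter_upwards [self_mem_nhdsWithin] with v hv
    exact (h0 v hv).symm
  exact tendsto_nhds_unique h1 h2

lemma aux_exists_small_right {g : ℝ → H} {s : Set ℝ} (hg : ContinuousOn g s)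
    {c d : ℝ} (hcd : c < d) (hsub : Ioo c d ⊆ s) (hd : d ∈ s) (hgd : g d = 0)
    {ε : ℝ} (hε : 0 < ε) : ∃ u ∈ Ioo c d, ‖g u‖ < ε := by
  haveI : (nhdsWithin d (Ioo c d)).NeBot := by
    refine mem_closure_iff_nhdsWithin_neBot.1 ?_
    rw [closure_Ioo hcd.ne]; exact ⟨le_of_lt hcd, le_refl d⟩
  have h1 : Filter.Tendsto g (nhdsWithin d (Ioo c d)) (nhds 0) := by
    rw [← hgd]
    exact (hg d hd).mono_left (nhdsWithin_mono _ hsub)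
  have h2 : ∀ᶠ u in nhdsWithin d (Ioo c d), ‖g u‖ < ε := by
    have h3 := h1.norm
    rw [norm_zero] at h3
    exact h3.eventually_lt_const hε
  obtain ⟨u, hu1, hu2⟩ := (h2.and self_mem_nhdsWithin).exists
  exact ⟨u, hu2, hu1⟩

lemma aux_exists_small_left {g : ℝ → H} {s : Set ℝ} (hg : ContinuousOn g s)
    {c d : ℝ} (hcd : c < d) (hsub : Ioo c d ⊆ s) (hc : c ∈ s) (hgc : g c = 0)
    {ε : ℝ} (hε : 0 < ε) : ∃ u ∈ Ioo c d, ‖g u‖ < ε := by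
  haveI : (nhdsWithin c (Ioo c d)).NeBot := by
    refine mem_closure_iff_nhdsWithin_neBot.1 ?_
    rw [closure_Ioo hcd.ne]; exact ⟨le_refl c, le_of_lt hcd⟩
  have h1 : Filter.Tendsto g (nhdsWithin c (Ioo c d)) (nhds 0) := by
    rw [← hgc]
    exact (hg c hc).mono_left (nhdsWithin_mono _ hsub)
  have h2 : ∀ᶠ u in nhdsWithin c (Ioo c d), ‖g u‖ < ε := by
    have h3 := h1.norm
    rw [norm_zero] at h3
    exact h3.eventually_lt_const hε
  obtain ⟨u, hu1, hu2⟩ := (h2.and self_mem_nhdsWithin).exists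
  exact ⟨u, hu2, hu1⟩

lemma aux_totallyBounded {S : Set H}
    (h : ∀ ε > (0:ℝ), ∃ C : Set H, IsCompact C ∧ S ⊆ C + Metric.closedBall (0:H) ε) :
    TotallyBounded S := by
  rw [Metric.totallyBounded_iff]
  intro ε hε
  obtain ⟨C, hC, hsub⟩ := h (ε/4) (by linarith)
  obtain ⟨t, htf, htsub⟩ := Metric.totallyBounded_iff.1 hC.totallyBounded (ε/4) (by linarith)
  refine ⟨t, htf, ?_⟩
  intro x hx
  obtain ⟨a, ha, b, hb, rfl⟩ := Set.mem_add.1 (hsub hx)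
  obtain ⟨y, hy, hay⟩ := Set.mem_iUnion₂.1 (htsub ha)
  refine Set.mem_iUnion₂.2 ⟨y, hy, ?_⟩
  rw [Metric.mem_ball] at hay ⊢
  have hbn : ‖b‖ ≤ ε/4 := by simpa [dist_zero_right] using hb
  have htri : dist (a + b) y ≤ ‖b‖ + dist a y := by
    rw [dist_eq_norm, show a + b - y = b + (a - y) by abel]
    exact (norm_add_le _ _).trans (by rw [dist_eq_norm])
  linarith

lemma aux_unif_small (T : ℝ → H →L[ℝ] H)
    (hT0 : T 0 = ContinuousLinearMap.id ℝ H)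
    (hTstrong : ∀ x : H, ContinuousOn (fun t => T t x) (Ici (0:ℝ)))
    (τ M : ℝ) (hτ : 0 ≤ τ) (hM : ∀ u ∈ Icc (0:ℝ) τ, ‖T u‖ ≤ M)
    {S : Set H} (hS : IsCompact S) {ε : ℝ} (hε : 0 < ε) :
    ∃ δ > 0, ∀ h ∈ Icc (0:ℝ) τ, h ≤ δ → ∀ x ∈ S, ‖T h x - x‖ ≤ ε := by
  have hM0 : 0 ≤ M := le_trans (norm_nonneg _) (hM 0 ⟨le_refl _, hτ⟩)
  set r : ℝ := ε / (2 * (M + 2)) with hr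
  have hrpos : 0 < r := by positivity
  obtain ⟨t, htf, htsub⟩ := Metric.totallyBounded_iff.1 hS.totallyBounded r hrpos
  have hz : ∀ z : H, ∃ δ > 0, ∀ h, 0 ≤ h → h ≤ δ → ‖T h z - z‖ ≤ ε/2 := by
    intro z
    have hc : ContinuousWithinAt (fun t => T t z) (Ici 0) 0 := (hTstrong z) 0 self_mem_Ici
    rw [Metric.continuousWithinAt_iff] at hc
    obtain ⟨δ, hδ, hδ'⟩ := hc (ε/2) (by linarith)
    refine ⟨δ/2, by linarith, fun h hh0 hhδ => ?_⟩
    have hd : dist h 0 < δ := by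
      rw [Real.dist_eq, sub_zero, abs_of_nonneg hh0]; linarith
    have h2 := hδ' (mem_Ici.2 hh0) hd
    rw [hT0] at h2
    simp only [ContinuousLinearMap.id_apply] at h2
    rw [dist_eq_norm] at h2
    exact h2.le
  choose δf hδfpos hδf using hz
  set Nets : Set ℝ := insert (1:ℝ) (δf '' t) with hNets
  have hFinfin : Nets.Finite := (htf.image δf).insert 1
  have hFinne : Nets.Nonempty := ⟨1, Or.inl rfl⟩
  set δ := sInf Nets with hδdef
  have hδmem : δ ∈ Nets := hFinne.csInf_mem hFinfin
  have hδpos : 0 < δ := by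
    rw [hNets, Set.mem_insert_iff] at hδmem
    rcases hδmem with h | ⟨z, _, hEq⟩
    · rw [h]; norm_num
    · rw [← hEq]; exact hδfpos z
  refine ⟨δ, hδpos, ?_⟩
  intro h hh hhδ x hx
  obtain ⟨z, hzt, hxz⟩ := Set.mem_iUnion₂.1 (htsub hx)
  rw [Metric.mem_ball] at hxz
  have hδz : δ ≤ δf z := csInf_le hFinfin.bddBelow (Or.inr ⟨z, hzt, rfl⟩)
  have hTz : ‖T h z - z‖ ≤ ε/2 := hδf z h hh.1 (le_trans hhδ hδz)
  have hTxz : ‖T h (x - z)‖ ≤ M * r := by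
    refine le_trans ((T h).le_opNorm _) ?_
    have := hM h hh
    have hxz' : ‖x - z‖ ≤ r := by rw [← dist_eq_norm]; exact hxz.le
    exact mul_le_mul this hxz' (norm_nonneg _) hM0
  have hdecomp : T h x - x = T h (x - z) + (T h z - z) + (z - x) := by
    rw [map_sub]; abel
  have hzx : ‖z - x‖ ≤ r := by rw [norm_sub_rev, ← dist_eq_norm]; exact hxz.le
  have hrM : r * (M + 2) = ε / 2 := by
    rw [hr]; field_simp
  calc ‖T h x - x‖ = ‖T h (x - z) + (T h z - z) + (z - x)‖ := by rw [hdecomp]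
    _ ≤ ‖T h (x - z) + (T h z - z)‖ + ‖z - x‖ := norm_add_le _ _
    _ ≤ ‖T h (x - z)‖ + ‖T h z - z‖ + ‖z - x‖ := by linarith [norm_add_le (T h (x-z)) (T h z - z)]
    _ ≤ M * r + ε/2 + r := by linarith
    _ ≤ ε := by nlinarith

lemma aux_SJ_totallyBounded (T : ℝ → H →L[ℝ] H)
    (hTadd : ∀ s t : ℝ, 0 ≤ s → 0 ≤ t → T (s + t) = (T s).comp (T t))
    (hTcompact : ∀ t : ℝ, 0 < t → IsCompactOperator (T t))
    (τ K M : ℝ) (hτ : 0 ≤ τ) (hK : 0 ≤ K) (hM0 : 0 ≤ M)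
    (hM : ∀ u ∈ Icc (0:ℝ) τ, ‖T u‖ ≤ M)
    (f : ℕ → ℝ → H) (hf : ∀ m : ℕ, ∀ s ∈ Set.Icc (0 : ℝ) τ, ‖f m s‖ ≤ K) :
    TotallyBounded {x : H | ∃ m, ∃ t ∈ Icc (0:ℝ) τ,
      x = ∫ s in (0:ℝ)..t, T (t - s) (f m s)} := by
  apply aux_totallyBounded
  intro ε hε
  set ε' : ℝ := ε / (M * K + 1) with hε'
  have hε'pos : 0 < ε' := by positivity
  have hMKε' : M * K * ε' ≤ ε := by
    rw [hε']
    calc M * K * (ε / (M * K + 1)) ≤ (M * K + 1) * (ε / (M * K + 1)) := by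
          apply mul_le_mul_of_nonneg_right (by linarith) (by positivity)
      _ = ε := by field_simp
  set V : Set H := (fun x => T (ε'/2) x) '' Metric.closedBall (0:H) (M * K) ∪ {0} with hV
  have hVtb : TotallyBounded V := by
    apply TotallyBounded.union
    · have hcomp : IsCompact (closure ((fun x => T (ε'/2) x) '' Metric.closedBall (0:H) (M*K))) := by
        have h1 := hTcompact (ε'/2) (by positivity)
        exact h1.isCompact_closure_image_of_isVonNBounded
          (NormedSpace.isVonNBounded_closedBall ℝ H (M*K))
      exact hcomp.totallyBounded.subset subset_closure
    · exact Set.finite_singleton 0 |>.totallyBounded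
  set W : Set H := closure (convexHull ℝ V) with hW
  have hWcompact : IsCompact W :=
    TotallyBounded.isCompact_of_isClosed
      ((totallyBounded_convexHull.2 hVtb).closure) isClosed_closure
  have hWconv : Convex ℝ W := (convex_convexHull ℝ V).closure
  have h0W : (0:H) ∈ W := subset_closure (subset_convexHull ℝ V (Or.inr rfl))
  set C : Set H := (fun p : ℝ × H => p.1 • p.2) '' (Icc (0:ℝ) τ ×ˢ W) with hC
  have hCcompact : IsCompact C :=
    (isCompact_Icc.prod hWcompact).image (continuous_fst.smul continuous_snd)
  have h0C : (0:H) ∈ C := ⟨(0, 0), ⟨⟨le_refl _, hτ⟩, h0W⟩, by simp⟩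
  refine ⟨C, hCcompact, ?_⟩
  rintro x ⟨m, t, ht, rfl⟩
  set t₁ : ℝ := max (t - ε') 0 with ht₁
  have ht₁0 : 0 ≤ t₁ := le_max_right _ _
  have ht₁t : t₁ ≤ t := max_le (by linarith) ht.1
  have htt₁ : t - t₁ ≤ ε' := by
    rcases le_total (t - ε') 0 with h | h
    · rw [ht₁, max_eq_right h]; linarith
    · rw [ht₁, max_eq_left h]; linarith
  by_cases hg : IntervalIntegrable (fun s => T (t - s) (f m s)) volume 0 t
  · have hsub1 : uIcc (0:ℝ) t₁ ⊆ uIcc (0:ℝ) t := by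
      rw [uIcc_of_le ht₁0, uIcc_of_le ht.1]; exact Icc_subset_Icc_right ht₁t
    have hsub2 : uIcc t₁ t ⊆ uIcc (0:ℝ) t := by
      rw [uIcc_of_le ht₁t, uIcc_of_le ht.1]; exact Icc_subset_Icc_left ht₁0
    have hsplit2 : (∫ s in (0:ℝ)..t, T (t - s) (f m s)) =
        (∫ s in (0:ℝ)..t₁, T (t - s) (f m s)) + ∫ s in t₁..t, T (t - s) (f m s) :=
      (intervalIntegral.integral_add_adjacent_intervals
        (hg.mono_set hsub1) (hg.mono_set hsub2)).symm
    have hmain : (∫ s in (0:ℝ)..t₁, T (t - s) (f m s)) ∈ C := by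
      rcases eq_or_lt_of_le ht₁0 with h0 | h0
    -- t₁ = 0
      · rw [← h0]
        simpa using h0C
      · have htε : 0 ≤ t - ε' := by
          by_contra hcon
          push_neg at hcon
          rw [ht₁, max_eq_right hcon.le] at h0
          exact lt_irrefl 0 h0
        have ht₁eq : t₁ = t - ε' := by rw [ht₁, max_eq_left htε]
        have hmeszero : volume (Ioc (0:ℝ) t₁) ≠ 0 := by
          simp only [Real.volume_Ioc, sub_zero]
          simpa using h0
        have hmesfin : volume (Ioc (0:ℝ) t₁) ≠ ⊤ := by
          simp [Real.volume_Ioc]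
        have hint : IntegrableOn (fun s => T (t - s) (f m s)) (Ioc 0 t₁) volume := by
          have h1 := (intervalIntegrable_iff_integrableOn_Ioc_of_le ht.1).1 hg
          exact h1.mono_set (Ioc_subset_Ioc_right ht₁t)
        have hptw : ∀ s ∈ Ioc (0:ℝ) t₁, T (t - s) (f m s) ∈ W := by
          intro s hs
          apply subset_closure
          apply subset_convexHull ℝ V
          left
          have hsε : ε' ≤ t - s := by
            have h2 := hs.2
            rw [ht₁eq] at h2
            linarith
          refine ⟨T (t - s - ε'/2) (f m s), ?_, ?_⟩
          · rw [Metric.mem_closedBall, dist_zero_right]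
            refine le_trans ((T _).le_opNorm _) ?_
            refine mul_le_mul (hM _ ⟨by linarith, by linarith [hs.1, ht.2]⟩)
              (hf m s ⟨hs.1.le, le_trans (le_trans hs.2 ht₁t) ht.2⟩) (norm_nonneg _) hM0
          · have h3 := hTadd (ε'/2) (t - s - ε'/2) (by positivity) (by linarith)
            rw [show ε'/2 + (t - s - ε'/2) = t - s by ring] at h3
            rw [h3]; rfl
        have havg : (⨍ s in Ioc (0:ℝ) t₁, T (t - s) (f m s) ∂volume) ∈ W :=
          hWconv.set_average_mem isClosed_closure hmeszero hmesfin
            ((ae_restrict_iff' measurableSet_Ioc).2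
              (Filter.Eventually.of_forall hptw)) hint
        have hI : (∫ s in (0:ℝ)..t₁, T (t - s) (f m s)) =
            t₁ • (⨍ s in Ioc (0:ℝ) t₁, T (t - s) (f m s) ∂volume) := by
          rw [intervalIntegral.integral_of_le ht₁0, setAverage_eq, measureReal_def, Real.volume_Ioc, sub_zero,
            ENNReal.toReal_ofReal ht₁0, smul_inv_smul₀ (ne_of_gt h0)]
        rw [hI]
        exact ⟨(t₁, _), ⟨⟨ht₁0, le_trans ht₁t ht.2⟩, havg⟩, rfl⟩
    rw [hsplit2]
    refine Set.add_mem_add hmain ?_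
    rw [Metric.mem_closedBall, dist_zero_right]
    refine le_trans (aux_norm_integral T (f m) M K τ hτ hM (hf m) t₁ t ht₁0 ht₁t ht.2) ?_
    exact le_trans (mul_le_mul_of_nonneg_left htt₁ (by positivity)) hMKε'
  · rw [intervalIntegral.integral_undef hg]
    have h01 : (0:H) ∈ Metric.closedBall (0:H) ε := Metric.mem_closedBall_self hε.le
    have := Set.add_mem_add h0C h01
    simpa using this

end Aux

/-- Compactness: if `(T t)` is a `C₀`-semigroup on a Hilbert space with `T t`
compact for `t > 0`, and `y_m(t) = T(t)y₀ + ∫₀ᵗ T(t−s) f_m(s) ds` with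
`‖f_m s‖ ≤ K` uniformly, then `{y_m t}` is relatively compact in `H` for each
`t ∈ [0,τ]`, and `{y_m}` is relatively compact in `C([0,τ];H)` (some
subsequence converges uniformly on `[0,τ]`). -/
theorem variation_of_constants_relatively_compact
    {H : Type*} [NormedAddCommGroup H] [InnerProductSpace ℝ H] [CompleteSpace H]
    (T : ℝ → H →L[ℝ] H)
    (hT0 : T 0 = ContinuousLinearMap.id ℝ H)
    (hTadd : ∀ s t : ℝ, 0 ≤ s → 0 ≤ t → T (s + t) = (T s).comp (T t))
    (hTstrong : ∀ x : H, ContinuousOn (fun t => T t x) (Set.Ici (0 : ℝ)))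
    (hTcompact : ∀ t : ℝ, 0 < t → IsCompactOperator (T t))
    (τ K : ℝ) (hτ : 0 ≤ τ) (hK : 0 ≤ K)
    (y₀ : H) (f : ℕ → ℝ → H)
    (hf : ∀ m : ℕ, ∀ s ∈ Set.Icc (0 : ℝ) τ, ‖f m s‖ ≤ K)
    (y : ℕ → ℝ → H)
    (hycont : ∀ m, ContinuousOn (y m) (Set.Icc 0 τ))
    (hy : ∀ m : ℕ, ∀ t ∈ Set.Icc (0 : ℝ) τ,
      y m t = T t y₀ + ∫ s in (0 : ℝ)..t, T (t - s) (f m s)) :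
    (∀ t ∈ Set.Icc (0 : ℝ) τ, IsCompact (closure {z : H | ∃ m : ℕ, z = y m t})) ∧
    ∃ φ : ℕ → ℕ, StrictMono φ ∧ ∃ z : ℝ → H,
      TendstoUniformlyOn (fun k => y (φ k)) z Filter.atTop (Set.Icc 0 τ) := by
  classical
  -- uniform bound on operators
  obtain ⟨M₀, hM₀⟩ : ∃ C, ∀ u : Icc (0:ℝ) τ, ‖T u‖ ≤ C := by
    apply banach_steinhaus
    intro x
    obtain ⟨C, hC⟩ := (isCompact_Icc (a := (0:ℝ)) (b := τ)).exists_bound_of_continuousOn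
      ((hTstrong x).mono Icc_subset_Ici_self)
    exact ⟨C, fun u => hC u u.2⟩
  set M := max M₀ 0 with hMdef
  have hM : ∀ u ∈ Icc (0:ℝ) τ, ‖T u‖ ≤ M := fun u hu =>
    le_trans (hM₀ ⟨u, hu⟩) (le_max_left _ _)
  have hM0 : 0 ≤ M := le_max_right _ _
  set J : ℕ → ℝ → H := fun m t => ∫ s in (0:ℝ)..t, T (t - s) (f m s) with hJdef
  have hyJ : ∀ m, ∀ t ∈ Icc (0:ℝ) τ, y m t = T t y₀ + J m t := hy
  have htail : ∀ m (v u : ℝ), 0 ≤ v → v ≤ u → u ≤ τ →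
      ‖∫ s in v..u, T (u - s) (f m s)‖ ≤ M * K * (u - v) :=
    fun m v u h1 h2 h3 => aux_norm_integral T (f m) M K τ hτ hM (hf m) v u h1 h2 h3
  have hJjunk : ∀ m t, ¬ IntervalIntegrable (fun s => T (t - s) (f m s)) volume 0 t →
      J m t = 0 := fun m t h => intervalIntegral.integral_undef h
  have hsplit : ∀ m (v u : ℝ), 0 ≤ v → v ≤ u →
      IntervalIntegrable (fun s => T (v - s) (f m s)) volume 0 v →
      IntervalIntegrable (fun s => T (u - s) (f m s)) volume 0 u →
      J m u = T (u - v) (J m v) + ∫ s in v..u, T (u - s) (f m s) :=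
    fun m v u h1 h2 h3 h4 => aux_split T (f m) hTadd v u h1 h2 h3 h4
  -- the compact set of integral values
  set SJ : Set H := {x : H | ∃ m, ∃ t ∈ Icc (0:ℝ) τ, x = J m t} with hSJ
  have hSJtb : TotallyBounded SJ :=
    aux_SJ_totallyBounded T hTadd hTcompact τ K M hτ hK hM0 hM f hf
  set SJc := closure SJ with hSJc
  have hSJcomp : IsCompact SJc :=
    TotallyBounded.isCompact_of_isClosed hSJtb.closure isClosed_closure
  -- difference functions and bad sets
  set gm : ℕ → ℝ → H := fun m u => y m u - T u y₀ with hgm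
  have hgmcont : ∀ m, ContinuousOn (gm m) (Icc 0 τ) := fun m =>
    (hycont m).sub ((hTstrong y₀).mono Icc_subset_Ici_self)
  have hgmJ : ∀ m, ∀ u ∈ Icc (0:ℝ) τ, gm m u = J m u := by
    intro m u hu
    rw [hgm]
    simp only
    rw [hyJ m u hu]
    abel
  set B : ℕ → Set ℝ := fun m =>
    {u ∈ Icc (0:ℝ) τ | ¬ IntervalIntegrable (fun s => T (u - s) (f m s)) volume 0 u} with hB
  have hBzero : ∀ m, ∀ u ∈ closure (B m), gm m u = 0 := by
    intro m
    apply aux_vanish_closure isClosed_Icc (fun u hu => hu.1) (hgmcont m)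
    intro u hu
    rw [hgmJ m u hu.1, hJjunk m u hu.2]
  have hclosB_Icc : ∀ m, closure (B m) ⊆ Icc (0:ℝ) τ := fun m =>
    closure_minimal (fun u hu => hu.1) isClosed_Icc
  have hGoodOf : ∀ m, ∀ u ∈ Icc (0:ℝ) τ, u ∉ closure (B m) →
      IntervalIntegrable (fun s => T (u - s) (f m s)) volume 0 u := by
    intro m u hu hnc
    by_contra h
    exact hnc (subset_closure ⟨hu, h⟩)
  -- equicontinuity
  have hEQ : ∀ ε > (0:ℝ), ∃ δ > (0:ℝ), ∀ m, ∀ t ∈ Icc (0:ℝ) τ, ∀ t' ∈ Icc (0:ℝ) τ,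
      t ≤ t' → t' - t ≤ δ → ‖y m t' - y m t‖ ≤ ε := by
    intro ε hε
    set ε₁ := ε/8 with hε₁
    have hε₁pos : 0 < ε₁ := by positivity
    obtain ⟨δ₁, hδ₁pos, hδ₁⟩ := aux_unif_small T hT0 hTstrong τ M hτ hM hSJcomp hε₁pos
    obtain ⟨δ₂, hδ₂pos, hδ₂⟩ : ∃ δ > (0:ℝ), ∀ a ∈ Icc (0:ℝ) τ, ∀ b ∈ Icc (0:ℝ) τ,
        |a - b| < δ → ‖T a y₀ - T b y₀‖ ≤ ε₁ := by
      have huc := (isCompact_Icc (a := (0:ℝ)) (b := τ)).uniformContinuousOn_of_continuous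
        ((hTstrong y₀).mono Icc_subset_Ici_self)
      rw [Metric.uniformContinuousOn_iff] at huc
      obtain ⟨δ, hδ, h⟩ := huc ε₁ hε₁pos
      refine ⟨δ, hδ, fun a ha b hb hab => ?_⟩
      have h2 := h a ha b hb (by rwa [Real.dist_eq])
      rw [dist_eq_norm] at h2
      exact h2.le
    set ε₂ := ε₁ / (M + 1) with hε₂def
    have hε₂pos : 0 < ε₂ := by positivity
    have hMε₂ : M * ε₂ ≤ ε₁ := by
      have h1 : ε₂ * (M + 1) = ε₁ := div_mul_cancel₀ _ (by positivity)
      nlinarith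
    set δ₃ := ε₁ / (M * K + 1) with hδ₃def
    have hδ₃pos : 0 < δ₃ := by positivity
    have hMKδ₃ : M * K * δ₃ ≤ ε₁ := by
      rw [hδ₃def]
      calc M * K * (ε₁ / (M * K + 1)) ≤ (M * K + 1) * (ε₁ / (M * K + 1)) := by
            apply mul_le_mul_of_nonneg_right (by linarith) (by positivity)
        _ = ε₁ := by field_simp
    set δ := min δ₁ (min (δ₂/2) δ₃) with hδdef
    have hδpos : 0 < δ := by
      apply lt_min hδ₁pos
      exact lt_min (by linarith) hδ₃pos
    refine ⟨δ, hδpos, ?_⟩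
    intro m t ht t' ht' htt' hδle
    have hδleδ₁ : t' - t ≤ δ₁ := le_trans hδle (min_le_left _ _)
    have hδleδ₂ : t' - t ≤ δ₂/2 := le_trans hδle (le_trans (min_le_right _ _) (min_le_left _ _))
    have hδleδ₃ : t' - t ≤ δ₃ := le_trans hδle (le_trans (min_le_right _ _) (min_le_right _ _))
    have hJSJ : ∀ u ∈ Icc (0:ℝ) τ, J m u ∈ SJc := fun u hu => subset_closure ⟨m, u, hu, rfl⟩
    have hbound_tail : ∀ (v u : ℝ), 0 ≤ v → v ≤ u → u ≤ τ → u - v ≤ δ₃ →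
        ‖∫ s in v..u, T (u - s) (f m s)‖ ≤ ε₁ := by
      intro v u h1 h2 h3 h4
      refine le_trans (htail m v u h1 h2 h3) (le_trans ?_ hMKδ₃)
      exact mul_le_mul_of_nonneg_left h4 (mul_nonneg hM0 hK)
    -- main case analysis: bound ‖gm m t' - gm m t‖
    have hgdiff : ‖gm m t' - gm m t‖ ≤ 6 * ε₁ := by
      by_cases hcase : (closure (B m) ∩ Icc t t').Nonempty
      · -- bound each endpoint value separately
        have hgt : ‖gm m t‖ ≤ 3 * ε₁ := by
          by_cases htB : t ∈ closure (B m)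
          · rw [hBzero m t htB]
            simp only [norm_zero]
            linarith
          · have hGt := hGoodOf m t ht htB
            set b₀ := sInf (closure (B m) ∩ Icc t t') with hb₀
            have hbdd : BddBelow (closure (B m) ∩ Icc t t') := ⟨t, fun x hx => hx.2.1⟩
            have hb₀mem : b₀ ∈ closure (B m) ∩ Icc t t' :=
              (isClosed_closure.inter isClosed_Icc).csInf_mem hcase hbdd
            have hb₀t : t < b₀ := by
              rcases eq_or_lt_of_le hb₀mem.2.1 with h | h
              · exact absurd (show t ∈ closure (B m) by rw [h]; exact hb₀mem.1) htB
              · exact h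
            have hb₀Icc : b₀ ∈ Icc (0:ℝ) τ := hclosB_Icc m hb₀mem.1
            have hIooIcc : Ioo t b₀ ⊆ Icc (0:ℝ) τ := fun v hv =>
              ⟨le_trans ht.1 hv.1.le, le_trans hv.2.le hb₀Icc.2⟩
            obtain ⟨u, huIoo, hu_small⟩ := aux_exists_small_right (hgmcont m) hb₀t
              hIooIcc hb₀Icc (hBzero m b₀ hb₀mem.1) hε₁pos
            have huIcc : u ∈ Icc (0:ℝ) τ := hIooIcc huIoo
            have huGood : IntervalIntegrable (fun s => T (u - s) (f m s)) volume 0 u := by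
              refine hGoodOf m u huIcc ?_
              intro hucl
              have h5 : b₀ ≤ u := csInf_le hbdd
                ⟨hucl, huIoo.1.le, le_trans huIoo.2.le hb₀mem.2.2⟩
              exact absurd h5 (not_le.2 huIoo.2)
            have hut : u - t ≤ δ := by
              have := huIoo.2
              have := hb₀mem.2.2
              linarith [hδle]
            have hid := hsplit m t u ht.1 huIoo.1.le hGt huGood
            have h1 : ‖J m t - T (u - t) (J m t)‖ ≤ ε₁ := by
              rw [norm_sub_rev]
              refine hδ₁ (u - t) ⟨sub_nonneg.2 huIoo.1.le, by linarith [huIcc.2, ht.1]⟩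
                (le_trans hut (min_le_left _ _)) (J m t) (hJSJ t ht)
            have h2 : ‖T (u - t) (J m t)‖ ≤ ‖J m u‖ + ε₁ := by
              have h3 : T (u - t) (J m t) = J m u - ∫ s in t..u, T (u - s) (f m s) := by
                rw [hid]; abel
              rw [h3]
              refine le_trans (norm_sub_le _ _) ?_
              have h4 := hbound_tail t u ht.1 huIoo.1.le huIcc.2
                (le_trans hut (le_trans (min_le_right _ _) (min_le_right _ _)))
              linarith
            have h3 : ‖J m u‖ ≤ ε₁ := by
              rw [← hgmJ m u huIcc]; exact hu_small.le
            have h4 : ‖J m t‖ ≤ ‖J m t - T (u - t) (J m t)‖ + ‖T (u - t) (J m t)‖ := by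
              calc ‖J m t‖ = ‖(J m t - T (u - t) (J m t)) + T (u - t) (J m t)‖ := by
                    rw [sub_add_cancel]
                _ ≤ _ := norm_add_le _ _
            rw [hgmJ m t ht]
            linarith
        have hgt' : ‖gm m t'‖ ≤ 3 * ε₁ := by
          by_cases ht'B : t' ∈ closure (B m)
          · rw [hBzero m t' ht'B]
            simp only [norm_zero]
            linarith
          · have hGt' := hGoodOf m t' ht' ht'B
            set b₁ := sSup (closure (B m) ∩ Icc t t') with hb₁
            have hbdd : BddAbove (closure (B m) ∩ Icc t t') := ⟨t', fun x hx => hx.2.2⟩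
            have hb₁mem : b₁ ∈ closure (B m) ∩ Icc t t' :=
              (isClosed_closure.inter isClosed_Icc).csSup_mem hcase hbdd
            have hb₁t' : b₁ < t' := by
              rcases eq_or_lt_of_le hb₁mem.2.2 with h | h
              · exact absurd (show t' ∈ closure (B m) by rw [← h]; exact hb₁mem.1) ht'B
              · exact h
            have hb₁Icc : b₁ ∈ Icc (0:ℝ) τ := hclosB_Icc m hb₁mem.1
            have hIooIcc : Ioo b₁ t' ⊆ Icc (0:ℝ) τ := fun v hv =>
              ⟨le_trans hb₁Icc.1 hv.1.le, le_trans hv.2.le ht'.2⟩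
            obtain ⟨u, huIoo, hu_small⟩ := aux_exists_small_left (hgmcont m) hb₁t'
              hIooIcc hb₁Icc (hBzero m b₁ hb₁mem.1) hε₂pos
            have huIcc : u ∈ Icc (0:ℝ) τ := hIooIcc huIoo
            have huGood : IntervalIntegrable (fun s => T (u - s) (f m s)) volume 0 u := by
              refine hGoodOf m u huIcc ?_
              intro hucl
              have h5 : u ≤ b₁ := le_csSup hbdd
                ⟨hucl, le_trans hb₁mem.2.1 huIoo.1.le, huIoo.2.le⟩
              exact absurd h5 (not_le.2 huIoo.1)
            have ht'u : t' - u ≤ δ := by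
              have h6 := huIoo.1
              have h7 := hb₁mem.2.1
              linarith [hδle]
            have hid := hsplit m u t' huIcc.1 huIoo.2.le huGood hGt'
            have h1 : ‖T (t' - u) (J m u)‖ ≤ M * ε₂ := by
              refine le_trans ((T _).le_opNorm _) ?_
              refine mul_le_mul (hM _ ⟨sub_nonneg.2 huIoo.2.le, by linarith [ht'.2, huIcc.1]⟩)
                ?_ (norm_nonneg _) hM0
              rw [← hgmJ m u huIcc]
              exact hu_small.le
            have h2 := hbound_tail u t' huIcc.1 huIoo.2.le ht'.2
              (le_trans ht'u (le_trans (min_le_right _ _) (min_le_right _ _)))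
            rw [hgmJ m t' ht', hid]
            refine le_trans (norm_add_le _ _) ?_
            linarith
        refine le_trans (norm_sub_le _ _) ?_
        linarith
      · -- no bad points: direct estimate
        have hno : ∀ u ∈ Icc t t', u ∉ closure (B m) := by
          intro u hu hucl
          exact hcase ⟨u, hucl, hu⟩
        have hGt := hGoodOf m t ht (hno t ⟨le_refl t, htt'⟩)
        have hGt' := hGoodOf m t' ht' (hno t' ⟨htt', le_refl t'⟩)
        have hid := hsplit m t t' ht.1 htt' hGt hGt'
        rw [hgmJ m t' ht', hgmJ m t ht, hid]
        have h1 : ‖T (t' - t) (J m t) - J m t‖ ≤ ε₁ :=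
          hδ₁ (t' - t) ⟨sub_nonneg.2 htt', by linarith [ht.1, ht'.2]⟩
            (le_trans hδle (min_le_left _ _)) _ (hJSJ t ht)
        have h2 := hbound_tail t t' ht.1 htt' ht'.2 hδleδ₃
        calc ‖T (t' - t) (J m t) + (∫ s in t..t', T (t' - s) (f m s)) - J m t‖
            = ‖(T (t' - t) (J m t) - J m t) + ∫ s in t..t', T (t' - s) (f m s)‖ := by
              congr 1; abel
          _ ≤ ‖T (t' - t) (J m t) - J m t‖ + ‖∫ s in t..t', T (t' - s) (f m s)‖ :=
              norm_add_le _ _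
          _ ≤ 6 * ε₁ := by linarith
    -- conclude
    have hTdiff : ‖T t' y₀ - T t y₀‖ ≤ ε₁ := by
      refine hδ₂ t' ht' t ht ?_
      rw [abs_of_nonneg (sub_nonneg.2 htt')]
      linarith
    have hdec : y m t' - y m t = (T t' y₀ - T t y₀) + (gm m t' - gm m t) := by
      simp only [hgm]
      abel
    rw [hdec]
    refine le_trans (norm_add_le _ _) ?_
    rw [hε₁] at *
    linarith
  -- the big compact value set
  set Timg : Set H := (fun u => T u y₀) '' Icc (0:ℝ) τ with hTimg
  have hTimgcomp : IsCompact Timg :=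
    isCompact_Icc.image_of_continuousOn ((hTstrong y₀).mono Icc_subset_Ici_self)
  set sY : Set H := Timg + SJc with hsYdef
  have hsYcomp : IsCompact sY := hTimgcomp.add hSJcomp
  have hysY : ∀ m, ∀ t ∈ Icc (0:ℝ) τ, y m t ∈ sY := by
    intro m t ht
    rw [hyJ m t ht]
    exact Set.add_mem_add ⟨t, ht, rfl⟩ (subset_closure ⟨m, t, ht, rfl⟩)
  constructor
  · intro t ht
    refine hsYcomp.of_isClosed_subset isClosed_closure (closure_minimal ?_ hsYcomp.isClosed)
    rintro z ⟨m, rfl⟩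
    exact hysY m t ht
  · haveI : CompactSpace (Icc (0:ℝ) τ) := isCompact_iff_compactSpace.1 isCompact_Icc
    set F : ℕ → BoundedContinuousFunction (Icc (0:ℝ) τ) H := fun m =>
      BoundedContinuousFunction.mkOfCompact ⟨(Icc (0:ℝ) τ).restrict (y m), (hycont m).restrict⟩
      with hF
    have hequi : Equicontinuous ((↑) : Set.range F → (Icc (0:ℝ) τ) → H) := by
      intro x₀
      rw [Metric.equicontinuousAt_iff]
      intro ε hε
      obtain ⟨δ, hδpos, hδ⟩ := hEQ (ε/2) (by linarith)
      refine ⟨δ, hδpos, fun x hx i => ?_⟩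
      obtain ⟨g, hg⟩ := i
      obtain ⟨m, rfl⟩ := hg
      have hxd : |(x:ℝ) - (x₀:ℝ)| < δ := by
        rw [← Real.dist_eq, ← Subtype.dist_eq]
        exact hx
      have key : ‖y m (x:ℝ) - y m (x₀:ℝ)‖ ≤ ε/2 := by
        rcases le_total (x:ℝ) (x₀:ℝ) with hle | hle
        · rw [norm_sub_rev]
          refine hδ m x x.2 x₀ x₀.2 hle ?_
          rw [abs_of_nonpos (by linarith)] at hxd
          linarith
        · refine hδ m x₀ x₀.2 x x.2 hle ?_
          rw [abs_of_nonneg (by linarith)] at hxd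
          linarith
      have : dist (F m x) (F m x₀) = ‖y m (x:ℝ) - y m (x₀:ℝ)‖ := by
        rw [dist_eq_norm]; rfl
      change dist ((F m) x₀) ((F m) x) < ε
      rw [dist_comm, this]
      linarith
    have hclos : IsCompact (closure (Set.range F)) := by
      refine BoundedContinuousFunction.arzela_ascoli sY hsYcomp (Set.range F) ?_ hequi
      rintro g x ⟨m, rfl⟩
      exact hysY m x x.2
    obtain ⟨flim, _, φ, hφ, hconv⟩ :=
      hclos.tendsto_subseq (fun n => subset_closure (Set.mem_range_self n))
    refine ⟨φ, hφ, fun t => if h : t ∈ Icc (0:ℝ) τ then flim ⟨t, h⟩ else 0, ?_⟩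
    rw [Metric.tendstoUniformlyOn_iff]
    intro ε hε
    have hconv' := Metric.tendsto_nhds.1 hconv ε hε
    filter_upwards [hconv'] with k hk t ht
    have h1 : dist ((if h : t ∈ Icc (0:ℝ) τ then flim ⟨t, h⟩ else 0)) (y (φ k) t)
        = dist (flim ⟨t, ht⟩) ((F (φ k)) ⟨t, ht⟩) := by
      rw [dif_pos ht]; rfl
    rw [h1]
    calc dist (flim ⟨t, ht⟩) (F (φ k) ⟨t, ht⟩)
        ≤ dist flim (F (φ k)) := BoundedContinuousFunction.dist_coe_le_dist _
      _ = dist ((F ∘ φ) k) flim := dist_comm _ _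
      _ < ε := hk
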